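/- arXiv:1305.5955 — 2 statements merged into one kernel-verified Lean document; each statement's English description precedes it below -/
import Mathlib

section
/- Let (G,p) be an r-dimensional tensegrity framework on n vertices in ℝ^r and let Ω be a stress matrix of (G,p) with rank n−r−1. Then there exist an index set J = {j_1,…,j_{n−r−1}} ⊂ {1,…,n} and a Gale matrix Ẑ of (G,p) whose k-th column is the j_k-th column of Ω; in particular, Ẑ has the property that for every k = 1,…,n−r−1, the entry ẑ_{i j_k} = 0 for each missing edge {i,j_k} ∈ Ē of G. -/
/-!
Since `Pᵀ Ω = 0` and `Ω` is symmetric with `Ω e = 0`, every column of `Ω` is an affine dependency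
of the points `pⁱ`. Because the points affinely span `ℝ^r`, the map `v ↦ (Σ vᵢ pⁱ, Σ vᵢ)` is onto
`ℝ^r × ℝ`, so the affine dependencies form a space of dimension `n - r - 1`. The column space of
`Ω` has that dimension too, hence is the whole space, and any `n - r - 1` linearly independent
columns of `Ω` form a Gale matrix. Its zero pattern on missing edges is inherited from `Ω`.
-/

open Matrix BigOperators

noncomputable section

/-- Squared Euclidean distance between two points of `ℝ^r`. -/
def sqDist {r : ℕ} (x y : Fin r → ℝ) : ℝ := ∑ k, (x k - y k) ^ 2

/-- `(G,q)` is dominated by `(G,p)`, where the edges of `G` are partitioned into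
bars `B`, cables `C` and struts `S`. -/
def Dominates {n r s : ℕ} (B C S : Set (Fin n × Fin n))
    (p : Fin n → Fin r → ℝ) (q : Fin n → Fin s → ℝ) : Prop :=
  (∀ e ∈ B, sqDist (q e.1) (q e.2) = sqDist (p e.1) (p e.2)) ∧
  (∀ e ∈ C, sqDist (q e.1) (q e.2) ≤ sqDist (p e.1) (p e.2)) ∧
  (∀ e ∈ S, sqDist (p e.1) (p e.2) ≤ sqDist (q e.1) (q e.2))

/-- `(G,q)` is congruent to `(G,p)`. -/
def FrameworkCongruent {n r s : ℕ} (p : Fin n → Fin r → ℝ) (q : Fin n → Fin s → ℝ) : Prop :=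
  ∀ i j, sqDist (q i) (q j) = sqDist (p i) (p j)

/-- `(G,p)` is universally rigid: every framework `(G,q)` in any dimension `s`
dominated by `(G,p)` is congruent to `(G,p)`. -/
def UniversallyRigid {n r : ℕ} (B C S : Set (Fin n × Fin n))
    (p : Fin n → Fin r → ℝ) : Prop :=
  ∀ (s : ℕ) (q : Fin n → Fin s → ℝ), Dominates B C S p q → FrameworkCongruent p q

/-- `(G,q)` is affinely-dominated by `(G,p)`: dominated and `q^i = A p^i + b`. -/
def AffinelyDominated {n r : ℕ} (B C S : Set (Fin n × Fin n))
    (p q : Fin n → Fin r → ℝ) : Prop :=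
  Dominates B C S p q ∧
  ∃ (A : Matrix (Fin r) (Fin r) ℝ) (b : Fin r → ℝ), ∀ i, q i = A.mulVec (p i) + b

/-- `ω` is an equilibrium stress of the framework with edge set `E` and configuration `p`. -/
def IsStress {n r : ℕ} (E : Set (Fin n × Fin n)) (p : Fin n → Fin r → ℝ)
    (ω : Fin n → Fin n → ℝ) : Prop :=
  (∀ i j, ω i j = ω j i) ∧ (∀ i j, (i, j) ∉ E → ω i j = 0) ∧
  (∀ i : Fin n, ∑ j, ω i j • (p i - p j) = 0)

/-- A stress is proper if `ω_ij ≥ 0` on cables and `ω_ij ≤ 0` on struts. -/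
def IsProperStress {n : ℕ} (C S : Set (Fin n × Fin n)) (ω : Fin n → Fin n → ℝ) : Prop :=
  (∀ e ∈ C, 0 ≤ ω e.1 e.2) ∧ (∀ e ∈ S, ω e.1 e.2 ≤ 0)

/-- The stress matrix `Ω` associated to the stress `ω`. -/
def stressMatrix {n : ℕ} (ω : Fin n → Fin n → ℝ) : Matrix (Fin n) (Fin n) ℝ :=
  Matrix.of fun i j => if i = j then ∑ k, ω i k else -ω i j

/-- `B`, `C`, `S` are the (symmetrically encoded) bars, cables and struts of a
simple connected tensegrity graph on `{1,…,n}`. -/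
def TensegrityGraph {n : ℕ} (B C S : Set (Fin n × Fin n)) : Prop :=
  (∀ i j, (i, j) ∈ B → (j, i) ∈ B) ∧ (∀ i j, (i, j) ∈ C → (j, i) ∈ C) ∧
  (∀ i j, (i, j) ∈ S → (j, i) ∈ S) ∧ (∀ i : Fin n, (i, i) ∉ B ∪ C ∪ S) ∧
  B ∩ C = ∅ ∧ B ∩ S = ∅ ∧ C ∩ S = ∅ ∧
  (SimpleGraph.fromRel fun i j => (i, j) ∈ B ∪ C ∪ S).Connected

/-- A set of points of `ℝ^r` is in general position if every `r+1` of them are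
affinely independent. -/
def SetInGeneralPosition {r : ℕ} (A : Set (Fin r → ℝ)) : Prop :=
  ∀ T : Finset (Fin r → ℝ), ↑T ⊆ A → T.card = r + 1 →
    AffineIndependent ℝ (fun x : {x // x ∈ T} => (x : Fin r → ℝ))

/-- `Z` is a Gale matrix of the configuration with matrix `P`: its columns form a
basis of the null space of the matrix obtained by stacking `Pᵀ` on top of `eᵀ`. -/
def IsGaleMatrix {n r m : ℕ} (P : Matrix (Fin n) (Fin r) ℝ)
    (Z : Matrix (Fin n) (Fin m) ℝ) : Prop :=
  (∀ k, Pᵀ *ᵥ (fun i => Z i k) = 0) ∧ (∀ k, ∑ i, Z i k = 0) ∧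
  LinearIndependent ℝ (fun k i => Z i k) ∧
  ∀ v : Fin n → ℝ, Pᵀ *ᵥ v = 0 → ∑ i, v i = 0 →
    v ∈ Submodule.span ℝ (Set.range fun k i => Z i k)

/-- `Ω` is a stress matrix of the framework with edge set `E` and configuration
matrix `P` (with centroid at the origin): it is symmetric, vanishes on missing
edges, and satisfies `Pᵀ Ω = 0` and `Ω e = 0`. -/
def IsStressMatrix {n r : ℕ} (E : Set (Fin n × Fin n)) (P : Matrix (Fin n) (Fin r) ℝ)
    (Ω : Matrix (Fin n) (Fin n) ℝ) : Prop :=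
  Ω.IsSymm ∧ (∀ i j, i ≠ j → (i, j) ∉ E → Ω i j = 0) ∧
  Pᵀ * Ω = 0 ∧ Ω *ᵥ (fun _ => (1 : ℝ)) = 0

/-- The matrix `F^{ij} = (e^i - e^j)(e^i - e^j)ᵀ`. -/
def Fmat {n : ℕ} (i j : Fin n) : Matrix (Fin n) (Fin n) ℝ :=
  Matrix.vecMulVec (Pi.single i 1 - Pi.single j 1) (Pi.single i 1 - Pi.single j 1)

/-- The matrix `E^{ij} = e^i (e^j)ᵀ + e^j (e^i)ᵀ`. -/
def Emat {n : ℕ} (i j : Fin n) : Matrix (Fin n) (Fin n) ℝ :=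
  Matrix.vecMulVec (Pi.single i 1) (Pi.single j 1) +
    Matrix.vecMulVec (Pi.single j 1) (Pi.single i 1)

/-- The matrix `L^i = e^i eᵀ + e (e^i)ᵀ`. -/
def Lmat {n : ℕ} (i : Fin n) : Matrix (Fin n) (Fin n) ℝ :=
  Matrix.vecMulVec (Pi.single i 1) (fun _ => 1) +
    Matrix.vecMulVec (fun _ => 1) (Pi.single i 1)

/-- `ℰ(y) = Σ y_ij E^{ij}` (for `y` supported on the relevant pairs `i < j`). -/
def EscrY {n : ℕ} (y : Fin n → Fin n → ℝ) : Matrix (Fin n) (Fin n) ℝ :=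
  ∑ i, ∑ j, y i j • Emat i j

/-- The vector `x = -(1/n) ℰ(y) e + (1/(2n²)) (eᵀ ℰ(y) e) e`. -/
def xvec {n : ℕ} (y : Fin n → Fin n → ℝ) : Fin n → ℝ :=
  (-(1 / (n : ℝ))) • (EscrY y *ᵥ fun _ => (1 : ℝ)) +
    ((1 / (2 * (n : ℝ) ^ 2)) * ((fun _ => (1 : ℝ)) ⬝ᵥ (EscrY y *ᵥ fun _ => (1 : ℝ)))) •
      (fun _ : Fin n => (1 : ℝ))

section AffineDependencies

variable (K : Type*) {ι V : Type*} [Field K] [AddCommGroup V] [Module K V]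

/-- The kernel is the space of affine dependencies of `p`; for `V = ℝ^r` it is the null space
of `Pᵀ` stacked on top of `eᵀ`. -/
def affineDependencyMap [Fintype ι] (p : ι → V) : (ι → K) →ₗ[K] V × K :=
  Fintype.linearCombination K fun i => (p i, 1)

variable {K}

theorem span_range_prodMk_one_eq_top {p : ι → V} (hp : affineSpan K (Set.range p) = ⊤) :
    Submodule.span K (Set.range fun i => (p i, (1 : K))) = ⊤ := by
  set S := Submodule.span K (Set.range fun i => (p i, (1 : K)))
  have hmem (i : ι) : (p i, (1 : K)) ∈ S := Submodule.subset_span ⟨i, rfl⟩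
  obtain ⟨i₀⟩ : Nonempty ι := by
    by_contra h
    rw [not_nonempty_iff, ← Set.range_eq_empty_iff (f := p)] at h
    rw [h, AffineSubspace.span_empty] at hp
    exact AffineSubspace.bot_ne_top K V V hp
  have hdir : ∀ w ∈ vectorSpan K (Set.range p), (w, (0 : K)) ∈ S := by
    intro w hw
    rw [vectorSpan_range_eq_span_range_vsub_right K p i₀] at hw
    induction hw using Submodule.span_induction with
    | mem x hx =>
      obtain ⟨i, rfl⟩ := hx
      simpa using S.sub_mem (hmem i) (hmem i₀)
    | zero => exact S.zero_mem
    | add x y _ _ hx hy => simpa using S.add_mem hx hy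
    | smul a x _ hx => simpa using S.smul_mem a hx
  rw [eq_top_iff]
  rintro ⟨w, c⟩ -
  have hw : w - c • p i₀ ∈ vectorSpan K (Set.range p) := by
    rw [AffineSubspace.vectorSpan_eq_top_of_affineSpan_eq_top K V V hp]
    trivial
  simpa using S.add_mem (hdir _ hw) (S.smul_mem c (hmem i₀))

section Fintype

variable [Fintype ι]

theorem affineDependencyMap_apply (p : ι → V) (v : ι → K) :
    affineDependencyMap K p v = (∑ i, v i • p i, ∑ i, v i) := by
  simp only [affineDependencyMap, Fintype.linearCombination_apply, Prod.smul_mk, smul_eq_mul,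
    mul_one]
  exact Prod.ext (by simp [Prod.fst_sum]) (by simp [Prod.snd_sum])

theorem affineDependencyMap_surjective {p : ι → V} (hp : affineSpan K (Set.range p) = ⊤) :
    Function.Surjective (affineDependencyMap K p) := by
  rw [← LinearMap.range_eq_top, affineDependencyMap, Fintype.range_linearCombination]
  exact span_range_prodMk_one_eq_top hp

theorem finrank_ker_affineDependencyMap [FiniteDimensional K V] {p : ι → V}
    (hp : affineSpan K (Set.range p) = ⊤) :
    Module.finrank K (LinearMap.ker (affineDependencyMap K p)) =
      Fintype.card ι - Module.finrank K V - 1 := by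
  have h := LinearMap.finrank_range_add_finrank_ker (affineDependencyMap K p)
  rw [LinearMap.range_eq_top.2 (affineDependencyMap_surjective hp), finrank_top,
    Module.finrank_prod, Module.finrank_self, Module.finrank_fintype_fun_eq_card] at h
  omega

theorem mem_ker_affineDependencyMap_iff {κ : Type*} [Fintype κ] {p : ι → κ → K} {v : ι → K} :
    v ∈ LinearMap.ker (affineDependencyMap K p) ↔ (of p)ᵀ *ᵥ v = 0 ∧ ∑ i, v i = 0 := by
  rw [LinearMap.mem_ker, affineDependencyMap_apply, Prod.mk_eq_zero, mulVec_transpose,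
    vecMul_eq_sum]
  rfl

end Fintype

end AffineDependencies

theorem Matrix.exists_linearIndependent_cols_of_rank_eq {K m n : Type*} [Field K] [Fintype n]
    {A : Matrix m n K} {k : ℕ} (h : A.rank = k) :
    ∃ g : Fin k → n, LinearIndependent K (A.col ∘ g) ∧
      Submodule.span K (Set.range (A.col ∘ g)) = Submodule.span K (Set.range A.col) := by
  obtain ⟨κ, a, ha, hspan, hli⟩ := exists_linearIndependent' K A.col
  have : Finite κ := Finite.of_injective a ha
  have : Fintype κ := Fintype.ofFinite κ
  have hcard : Fintype.card κ = k := by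
    rw [← h, rank_eq_finrank_span_cols, ← hspan, finrank_span_eq_card hli]
  let e : Fin k ≃ κ := (Fintype.equivFinOfCardEq hcard).symm
  refine ⟨a ∘ e, hli.comp e e.injective, ?_⟩
  rw [← hspan, ← Function.comp_assoc, EquivLike.range_comp]

theorem IsStressMatrix.range_mulVecLin_le {n r : ℕ} {E : Set (Fin n × Fin n)}
    {p : Fin n → Fin r → ℝ} {Ω : Matrix (Fin n) (Fin n) ℝ} (hΩ : IsStressMatrix E (of p) Ω) :
    LinearMap.range Ω.mulVecLin ≤ LinearMap.ker (affineDependencyMap ℝ p) := by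
  obtain ⟨hsymm, -, hPΩ, hΩe⟩ := hΩ
  rintro _ ⟨v, rfl⟩
  rw [mem_ker_affineDependencyMap_iff, mulVecLin_apply, mulVec_mulVec, hPΩ, zero_mulVec]
  refine ⟨rfl, ?_⟩
  have : (fun _ => (1 : ℝ)) ᵥ* Ω = 0 := by rw [← mulVec_transpose, hsymm.eq, hΩe]
  calc ∑ i, (Ω *ᵥ v) i = (fun _ => 1) ⬝ᵥ (Ω *ᵥ v) := by simp [dotProduct]
    _ = ((fun _ => 1) ᵥ* Ω) ⬝ᵥ v := dotProduct_mulVec _ _ _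
    _ = 0 := by rw [this, zero_dotProduct]

theorem IsStressMatrix.range_mulVecLin_eq_ker {n r : ℕ} {E : Set (Fin n × Fin n)}
    {p : Fin n → Fin r → ℝ} {Ω : Matrix (Fin n) (Fin n) ℝ} (hΩ : IsStressMatrix E (of p) Ω)
    (hp : affineSpan ℝ (Set.range p) = ⊤) (hrank : Ω.rank = n - r - 1) :
    LinearMap.range Ω.mulVecLin = LinearMap.ker (affineDependencyMap ℝ p) := by
  refine Submodule.eq_of_le_of_finrank_le hΩ.range_mulVecLin_le ?_
  rw [finrank_ker_affineDependencyMap hp, Fintype.card_fin, Module.finrank_fin_fun, ← hrank]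
  rfl

theorem isGaleMatrix_of_span_cols_eq_ker {n r m : ℕ} {p : Fin n → Fin r → ℝ}
    {Z : Matrix (Fin n) (Fin m) ℝ} (hli : LinearIndependent ℝ Z.col)
    (hspan : Submodule.span ℝ (Set.range Z.col) = LinearMap.ker (affineDependencyMap ℝ p)) :
    IsGaleMatrix (of p) Z := by
  have hcol (k : Fin m) : Z.col k ∈ LinearMap.ker (affineDependencyMap ℝ p) :=
    hspan ▸ Submodule.subset_span ⟨k, rfl⟩
  simp only [mem_ker_affineDependencyMap_iff] at hcol
  exact ⟨fun k => (hcol k).1, fun k => (hcol k).2, hli,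
    fun v hv hsum => hspan ▸ mem_ker_affineDependencyMap_iff.2 ⟨hv, hsum⟩⟩

theorem statement17_general {n r : ℕ}
    (E : Set (Fin n × Fin n))
    (p : Fin n → Fin r → ℝ)
    (hdim : affineSpan ℝ (Set.range p) = ⊤)
    (Ω : Matrix (Fin n) (Fin n) ℝ)
    (hΩ : IsStressMatrix E (Matrix.of p) Ω)
    (hrank : Ω.rank = n - r - 1) :
    ∃ g : Fin (n - r - 1) → Fin n, Function.Injective g ∧
      IsGaleMatrix (Matrix.of p) (Matrix.of fun i k => Ω i (g k)) ∧
      ∀ (k : Fin (n - r - 1)) (i : Fin n),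
        i ≠ g k → (i, g k) ∉ E → Ω i (g k) = 0 := by
  obtain ⟨g, hli, hspan⟩ := Ω.exists_linearIndependent_cols_of_rank_eq hrank
  have hcols : Submodule.span ℝ (Set.range (Ω.col ∘ g)) =
      LinearMap.ker (affineDependencyMap ℝ p) := by
    rw [hspan, ← range_mulVecLin, hΩ.range_mulVecLin_eq_ker hdim hrank]
  exact ⟨g, hli.injective.of_comp, isGaleMatrix_of_span_cols_eq_ker hli hcols,
    fun k i hne hi => hΩ.2.1 i (g k) hne hi⟩

/-- if `Ω` is a stress matrix of rank `n-r-1`, then some `n-r-1`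
columns of `Ω` form a Gale matrix `Ẑ` of `(G,p)`; in particular `ẑ_{i j_k} = 0`
for every missing edge `{i, j_k}`. -/
theorem statement17 {n r : ℕ}
    (E : Set (Fin n × Fin n)) (hG : TensegrityGraph E ∅ ∅)
    (p : Fin n → Fin r → ℝ)
    (hdim : affineSpan ℝ (Set.range p) = ⊤)
    (hcentroid : ∀ k, ∑ i, p i k = 0)
    (Ω : Matrix (Fin n) (Fin n) ℝ)
    (hΩ : IsStressMatrix E (Matrix.of p) Ω)
    (hrank : Ω.rank = n - r - 1) :
    ∃ g : Fin (n - r - 1) → Fin n, Function.Injective g ∧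
      IsGaleMatrix (Matrix.of p) (Matrix.of fun i k => Ω i (g k)) ∧
      ∀ (k : Fin (n - r - 1)) (i : Fin n),
        i ≠ g k → (i, g k) ∉ E → Ω i (g k) = 0 :=
  statement17_general E p hdim Ω hΩ hrank
end
end

section
/- Let (G,p) be an r-dimensional tensegrity framework on n vertices in ℝ^r, let Z be a Gale matrix of (G,p), and assume (G,p) has a proper stress matrix Ω (associated with proper stress ω) with rank Ω = n−r−1. Then there exists a tensegrity framework (G,p') affinely-dominated by, but not congruent to, (G,p) if and only if there exists a non-zero y = (y_ij) ∈ ℝ^{|Ē|+|C⁰|+|S⁰|} with y_ij ≥ 0 for all {i,j} ∈ C⁰ and y_ij ≤ 0 for all {i,j} ∈ S⁰ such that ℰ⁰(y) Z = 0, where ℰ⁰(y) = Σ_{{i,j} ∈ Ē ∪ C⁰ ∪ S⁰} y_ij E^{ij}, C⁰ = {{i,j}∈C : ω_ij = 0} and S⁰ = {{i,j}∈S : ω_ij = 0}. -/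
open Matrix BigOperators

noncomputable section

/-!
For `q^i = A p^i + b` put `Φ = AᵀA - 1`: the squared length of `{i,j}` changes by
`(p^i - p^j)ᵀ Φ (p^i - p^j)`. If `q` is dominated by `p`, every term `ω_ij · change_ij` is
nonpositive, while their sum vanishes by equilibrium; so all of them vanish, which puts
`v_i = (p^i)ᵀ Φ p^i` in the kernel of `Ω`. The rank condition makes that kernel the column space of
`[P e]`, and then the matrix of changes annihilates `Z`: half its negative, read on `i < j`, is `y`.

Conversely, `ℰ⁰(y) Z = 0` says that the symmetric matrix `ℰ⁰(y)` kills the null space of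
`[P e]ᵀ`, so `ℰ⁰(y) = [P e] M [P e]ᵀ`, and the leading `r × r` block `Φ` of `M` satisfies
`(p^i - p^j)ᵀ Φ (p^i - p^j) = -2 ℰ⁰(y)_ij`. For small `s > 0` the matrix `1 + s Φ` is positive
semidefinite, hence equal to `AᵀA`, and `q^i = A p^i` is affinely dominated by, but not congruent
to, `p`.
-/

lemma Matrix.IsSymm.dotProduct_mulVec_comm {ι : Type*} [Fintype ι] {Φ : Matrix ι ι ℝ}
    (hΦ : Φ.IsSymm) (x y : ι → ℝ) : x ⬝ᵥ Φ *ᵥ y = y ⬝ᵥ Φ *ᵥ x := by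
  rw [dotProduct_mulVec, ← mulVec_transpose, hΦ.eq, dotProduct_comm]

lemma ker_mulVecLin_eq_range_of_mul_eq_zero {K : Type*} [Field K] {m ι : Type*} [Fintype m]
    [Fintype ι] [DecidableEq m] [DecidableEq ι] (Ω : Matrix m m K) (Γ : Matrix m ι K)
    (hΓ : Function.Injective Γ.mulVec) (hΩΓ : Ω * Γ = 0)
    (hrank : Ω.rank = Fintype.card m - Fintype.card ι) :
    LinearMap.ker Ω.mulVecLin = LinearMap.range Γ.mulVecLin := by
  have hle : LinearMap.range Γ.mulVecLin ≤ LinearMap.ker Ω.mulVecLin := by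
    rintro _ ⟨w, rfl⟩
    simp [mulVec_mulVec, hΩΓ]
  have hrange : Module.finrank K (LinearMap.range Γ.mulVecLin) = Fintype.card ι := by
    rw [LinearMap.finrank_range_of_inj hΓ, Module.finrank_fintype_fun_eq_card]
  have hcard : Fintype.card ι ≤ Fintype.card m := by
    simpa [hrange] using Submodule.finrank_le (LinearMap.range Γ.mulVecLin)
  have hker := LinearMap.finrank_range_add_finrank_ker Ω.mulVecLin
  rw [Module.finrank_fintype_fun_eq_card, ← rank, hrank] at hker
  exact (Submodule.eq_of_le_of_finrank_le hle (by omega)).symm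

lemma exists_isSymm_eq_mul_mul_transpose {m ι : Type*} [Fintype m] [Fintype ι] [DecidableEq m]
    [DecidableEq ι] (Γ : Matrix m ι ℝ) (hΓ : Function.Injective Γ.mulVec) (E : Matrix m m ℝ)
    (hE : E.IsSymm) (hker : ∀ v, Γᵀ *ᵥ v = 0 → E *ᵥ v = 0) :
    ∃ M : Matrix ι ι ℝ, M.IsSymm ∧ E = Γ * M * Γᵀ := by
  set G := Γᵀ * Γ
  have hG : IsUnit G.det := (isUnit_iff_isUnit_det G).1 <| by
    simpa [G, conjTranspose_eq_transpose_of_trivial] using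
      (PosDef.conjTranspose_mul_self Γ hΓ).isUnit
  have hGsymm : G⁻¹ᵀ = G⁻¹ := by simp [G, transpose_nonsing_inv]
  -- `J` is the orthogonal projection onto the column space of `Γ`.
  set J := Γ * G⁻¹ * Γᵀ
  have hJsymm : Jᵀ = J := by simp [J, hGsymm, Matrix.mul_assoc]
  have hΓJ : Γᵀ * (1 - J) = 0 := by
    rw [Matrix.mul_sub, Matrix.mul_one, ← Matrix.mul_assoc, ← Matrix.mul_assoc,
      mul_nonsing_inv G hG, Matrix.one_mul, sub_self]
  have hEJ : E * J = E := by
    have h : E * (1 - J) = 0 := by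
      ext i k
      exact congrFun (hker (fun j => (1 - J) j k) (funext fun l => congrFun (congrFun hΓJ l) k)) i
    rwa [mul_sub, mul_one, sub_eq_zero, eq_comm] at h
  have hJE : J * E = E := by
    simpa [transpose_mul, hE.eq, hJsymm] using congrArg transpose hEJ
  refine ⟨G⁻¹ * Γᵀ * E * Γ * G⁻¹, ?_, ?_⟩
  · simp [IsSymm, transpose_mul, hGsymm, hE.eq, Matrix.mul_assoc]
  · calc E = J * E * J := by rw [hJE, hEJ]
      _ = Γ * (G⁻¹ * Γᵀ * E * Γ * G⁻¹) * Γᵀ := by simp only [J, Matrix.mul_assoc]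

open scoped MatrixOrder in
lemma exists_transpose_mul_self_eq_one_add_smul {ι : Type*} [Fintype ι] [DecidableEq ι]
    (Φ : Matrix ι ι ℝ) (hΦ : Φ.IsSymm) :
    ∃ s : ℝ, 0 < s ∧ ∃ A : Matrix ι ι ℝ, Aᵀ * A = 1 + s • Φ := by
  set c := ‖toEuclideanCLM (n := ι) (𝕜 := ℝ) Φ‖
  have hquad : ∀ x : ι → ℝ, -(c * (x ⬝ᵥ x)) ≤ x ⬝ᵥ (Φ *ᵥ x) := by
    intro x
    set u := WithLp.toLp 2 x
    have hinner := abs_real_inner_le_norm u (toEuclideanCLM (𝕜 := ℝ) Φ u)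
    have hop := (toEuclideanCLM (𝕜 := ℝ) Φ).le_opNorm u
    have hnorm : x ⬝ᵥ x = ‖u‖ ^ 2 := by
      rw [← real_inner_self_eq_norm_sq, EuclideanSpace.inner_toLp_toLp, star_trivial]
    rw [inner_toEuclideanCLM] at hinner
    rw [hnorm]
    nlinarith [abs_le.1 hinner, norm_nonneg u]
  have hc : 0 ≤ c := norm_nonneg _
  refine ⟨1 / (c + 1), by positivity, ?_⟩
  have hsymm : (1 + (1 / (c + 1)) • Φ).IsHermitian := by
    rw [IsHermitian, conjTranspose_eq_transpose_of_trivial]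
    exact isSymm_one.add (hΦ.smul _)
  have hpsd : (1 + (1 / (c + 1)) • Φ).PosSemidef := by
    refine .of_dotProduct_mulVec_nonneg hsymm fun x => ?_
    have hx : 0 ≤ x ⬝ᵥ x := Finset.sum_nonneg fun i _ => mul_self_nonneg (x i)
    rw [star_trivial, add_mulVec, one_mulVec, smul_mulVec, dotProduct_add, dotProduct_smul,
      smul_eq_mul]
    have hcs : c * (1 / (c + 1)) ≤ 1 := by rw [mul_one_div, div_le_one (by positivity)]; linarith
    nlinarith [mul_le_mul_of_nonneg_left (hquad x) (by positivity : (0 : ℝ) ≤ 1 / (c + 1)),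
      mul_le_mul_of_nonneg_right hcs hx]
  obtain ⟨A, hA⟩ := CStarAlgebra.nonneg_iff_eq_star_mul_self.mp hpsd.nonneg
  exact ⟨A, by rw [hA, star_eq_conjTranspose, conjTranspose_eq_transpose_of_trivial]⟩

lemma sqDist_eq_dotProduct {r : ℕ} (x y : Fin r → ℝ) : sqDist x y = (x - y) ⬝ᵥ (x - y) := by
  simp [sqDist, dotProduct, sq]

lemma sqDist_mulVec_add {r : ℕ} (A : Matrix (Fin r) (Fin r) ℝ) (b x x' : Fin r → ℝ) :
    sqDist (A *ᵥ x + b) (A *ᵥ x' + b) =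
      sqDist x x' + (x - x') ⬝ᵥ ((Aᵀ * A - 1) *ᵥ (x - x')) := by
  have hdiff : A *ᵥ x + b - (A *ᵥ x' + b) = A *ᵥ (x - x') := by rw [mulVec_sub]; abel
  have hgram : (A *ᵥ (x - x')) ⬝ᵥ (A *ᵥ (x - x')) = (x - x') ⬝ᵥ ((Aᵀ * A) *ᵥ (x - x')) := by
    rw [← mulVec_mulVec, dotProduct_mulVec (x - x'), vecMul_transpose]
  rw [sqDist_eq_dotProduct, sqDist_eq_dotProduct, hdiff, hgram, sub_mulVec, one_mulVec,
    dotProduct_sub (x - x') _ (x - x')]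
  ring

lemma Dominates.stress_mul_sub_nonpos {n r s : ℕ} {B C S : Set (Fin n × Fin n)}
    {p : Fin n → Fin r → ℝ} {q : Fin n → Fin s → ℝ} (hdom : Dominates B C S p q)
    {ω : Fin n → Fin n → ℝ} (hsupp : ∀ i j, (i, j) ∉ B ∪ C ∪ S → ω i j = 0)
    (hproper : IsProperStress C S ω) (i j : Fin n) :
    ω i j * (sqDist (q i) (q j) - sqDist (p i) (p j)) ≤ 0 := by
  obtain ⟨hB, hC, hS⟩ := hdom
  by_cases hiB : (i, j) ∈ B
  · simp [hB _ hiB]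
  by_cases hiC : (i, j) ∈ C
  · exact mul_nonpos_of_nonneg_of_nonpos (hproper.1 _ hiC) (sub_nonpos.2 (hC _ hiC))
  by_cases hiS : (i, j) ∈ S
  · exact mul_nonpos_of_nonpos_of_nonneg (hproper.2 _ hiS) (sub_nonneg.2 (hS _ hiS))
  simp [hsupp i j (by simp [hiB, hiC, hiS])]

/-- The matrix `[P e]`. -/
def homogeneousConfig {n r : ℕ} (p : Fin n → Fin r → ℝ) : Matrix (Fin n) (Fin r ⊕ Unit) ℝ :=
  of fun i => Sum.elim (p i) 1

section HomogeneousConfig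

variable {n r : ℕ} (p : Fin n → Fin r → ℝ)

lemma homogeneousConfig_mulVec_apply (w : Fin r ⊕ Unit → ℝ) (i : Fin n) :
    (homogeneousConfig p *ᵥ w) i = p i ⬝ᵥ (w ∘ Sum.inl) + w (Sum.inr ()) := by
  simp [homogeneousConfig, mulVec, dotProduct, Fintype.sum_sum_type]

lemma transpose_homogeneousConfig_mulVec_eq_zero_iff (v : Fin n → ℝ) :
    (homogeneousConfig p)ᵀ *ᵥ v = 0 ↔ (of p)ᵀ *ᵥ v = 0 ∧ ∑ i, v i = 0 := by
  simp only [funext_iff, Sum.forall, mulVec, dotProduct, transpose_apply, homogeneousConfig,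
    of_apply, Sum.elim_inl, Sum.elim_inr, Pi.one_apply, one_mul, Pi.zero_apply,
    forall_const]

lemma mulVec_injective_of_affineSpan_eq_top (hdim : affineSpan ℝ (Set.range p) = ⊤) :
    Function.Injective (of p).mulVec := by
  refine (injective_iff_map_eq_zero (of p).mulVecLin).2 fun c hc => ?_
  have hsub : Set.range p ⊆ (LinearMap.ker (dotProductBilin ℝ ℝ c)).toAffineSubspace := by
    rintro _ ⟨i, rfl⟩
    show c ⬝ᵥ p i = 0
    rw [dotProduct_comm]
    exact congrFun hc i
  have hc : c ∈ (LinearMap.ker (dotProductBilin ℝ ℝ c)).toAffineSubspace :=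
    (hdim ▸ affineSpan_le_of_subset_coe hsub) (AffineSubspace.mem_top ℝ _ c)
  simpa using hc

lemma homogeneousConfig_mulVec_injective (hdim : affineSpan ℝ (Set.range p) = ⊤)
    (hcentroid : ∀ k, ∑ i, p i k = 0) :
    Function.Injective (homogeneousConfig p).mulVec := by
  refine (injective_iff_map_eq_zero (homogeneousConfig p).mulVecLin).2 fun w hw => ?_
  have hw' : ∀ i, p i ⬝ᵥ (w ∘ Sum.inl) + w (Sum.inr ()) = 0 := fun i => by
    rw [← homogeneousConfig_mulVec_apply]; exact congrFun hw i
  have hn : (n : ℝ) ≠ 0 := by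
    rintro hn
    obtain rfl : n = 0 := by exact_mod_cast hn
    rw [Set.range_eq_empty, AffineSubspace.span_empty] at hdim
    exact AffineSubspace.bot_ne_top ℝ (Fin r → ℝ) (Fin r → ℝ) hdim
  have hsum : ∑ i, p i = 0 := funext fun k => by simpa using hcentroid k
  have ht : w (Sum.inr ()) = 0 := by
    have := Finset.sum_eq_zero fun i (_ : i ∈ Finset.univ) => hw' i
    rw [Finset.sum_add_distrib, ← sum_dotProduct, hsum, zero_dotProduct, zero_add,
      Finset.sum_const, Finset.card_univ, Fintype.card_fin, nsmul_eq_mul] at this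
    exact (mul_eq_zero.1 this).resolve_left hn
  have hu : w ∘ Sum.inl = 0 := mulVec_injective_of_affineSpan_eq_top p hdim <| by
    rw [mulVec_zero]
    funext i
    show p i ⬝ᵥ (w ∘ Sum.inl) = 0
    simpa [ht] using hw' i
  ext (k | u)
  · exact congrFun hu k
  · exact ht

end HomogeneousConfig

section GaleMatrix

variable {n r m : ℕ} {p : Fin n → Fin r → ℝ} {Z : Matrix (Fin n) (Fin m) ℝ}

lemma IsGaleMatrix.transpose_homogeneousConfig_mul (hZ : IsGaleMatrix (of p) Z) :
    (homogeneousConfig p)ᵀ * Z = 0 := by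
  ext k l
  have hcol := (transpose_homogeneousConfig_mulVec_eq_zero_iff p fun i => Z i l).2
    ⟨hZ.1 l, hZ.2.1 l⟩
  exact congrFun hcol k

lemma IsGaleMatrix.homogeneousConfig_mulVec_vecMul (hZ : IsGaleMatrix (of p) Z)
    (w : Fin r ⊕ Unit → ℝ) : (homogeneousConfig p *ᵥ w) ᵥ* Z = 0 := by
  rw [← vecMul_transpose, vecMul_vecMul, hZ.transpose_homogeneousConfig_mul, vecMul_zero]

lemma IsGaleMatrix.mulVec_eq_zero {M : Matrix (Fin n) (Fin n) ℝ} (hZ : IsGaleMatrix (of p) Z)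
    (hM : M * Z = 0) {v : Fin n → ℝ} (hv : (homogeneousConfig p)ᵀ *ᵥ v = 0) : M *ᵥ v = 0 := by
  obtain ⟨hPv, hev⟩ := (transpose_homogeneousConfig_mulVec_eq_zero_iff p v).1 hv
  obtain ⟨c, rfl⟩ := (Submodule.mem_span_range_iff_exists_fun ℝ).1 (hZ.2.2.2 v hPv hev)
  have hcol : ∀ k, M *ᵥ (fun i => Z i k) = 0 := fun k => funext fun i => congrFun (congrFun hM i) k
  simp [mulVec_sum, mulVec_smul, hcol]

end GaleMatrix

def edgeQuad {n r : ℕ} (p : Fin n → Fin r → ℝ) (Φ : Matrix (Fin r) (Fin r) ℝ) :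
    Matrix (Fin n) (Fin n) ℝ :=
  of fun i j => (p i - p j) ⬝ᵥ Φ *ᵥ (p i - p j)

section EdgeQuad

variable {n r : ℕ} (p : Fin n → Fin r → ℝ)

lemma edgeQuad_isSymm (Φ : Matrix (Fin r) (Fin r) ℝ) : (edgeQuad p Φ).IsSymm := by
  ext i j
  simp only [edgeQuad, transpose_apply, of_apply]
  rw [← neg_sub (p i), mulVec_neg, neg_dotProduct, dotProduct_neg, neg_neg]

lemma edgeQuad_apply_self (Φ : Matrix (Fin r) (Fin r) ℝ) (i : Fin n) : edgeQuad p Φ i i = 0 := by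
  simp [edgeQuad]

variable {p} in
lemma IsGaleMatrix.edgeQuad_mul_eq_zero {m : ℕ} {Z : Matrix (Fin n) (Fin m) ℝ}
    (hZ : IsGaleMatrix (of p) Z) {Φ : Matrix (Fin r) (Fin r) ℝ} (hΦ : Φ.IsSymm)
    (hv : (fun j => p j ⬝ᵥ Φ *ᵥ p j) ᵥ* Z = 0) : edgeQuad p Φ * Z = 0 := by
  ext i k
  -- row `i` is `v` plus a vector in the column space of `[P e]`; `Z` annihilates both
  have hrow : edgeQuad p Φ i = homogeneousConfig p *ᵥ
      Sum.elim ((-2 : ℝ) • Φ *ᵥ p i) (fun _ => p i ⬝ᵥ Φ *ᵥ p i) + fun j => p j ⬝ᵥ Φ *ᵥ p j := by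
    funext j
    rw [Pi.add_apply, homogeneousConfig_mulVec_apply]
    simp only [edgeQuad, of_apply, mulVec_sub, sub_dotProduct, dotProduct_sub, Sum.elim_comp_inl,
      Sum.elim_inr, dotProduct_smul, hΦ.dotProduct_mulVec_comm (p i) (p j), smul_eq_mul]
    ring
  rw [mul_apply_eq_vecMul, hrow, add_vecMul, hZ.homogeneousConfig_mulVec_vecMul, hv, add_zero]
  rfl

lemma edgeQuad_toBlocks₁₁ {M : Matrix (Fin r ⊕ Unit) (Fin r ⊕ Unit) ℝ}
    {E : Matrix (Fin n) (Fin n) ℝ} (hE : E = homogeneousConfig p * M * (homogeneousConfig p)ᵀ)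
    (i j : Fin n) :
    edgeQuad p M.toBlocks₁₁ i j = E i i + E j j - E i j - E j i := by
  set Γ := homogeneousConfig p
  have hEapply : ∀ a b, E a b = Γ a ⬝ᵥ M *ᵥ Γ b := fun a b => by
    rw [hE, dotProduct_mulVec]; rfl
  have hdiff : Γ i - Γ j = Sum.elim (p i - p j) 0 := by
    ext (k | u) <;> simp [Γ, homogeneousConfig]
  have hquad : E i i + E j j - E i j - E j i = (Γ i - Γ j) ⬝ᵥ M *ᵥ (Γ i - Γ j) := by
    simp only [hEapply, mulVec_sub, dotProduct_sub, sub_dotProduct]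
    ring
  rw [hquad, hdiff, ← fromBlocks_toBlocks M, fromBlocks_mulVec, sumElim_dotProduct_sumElim]
  simp [edgeQuad]

end EdgeQuad

section Stress

variable {n r : ℕ} {ω : Fin n → Fin n → ℝ}

lemma stressMatrix_mulVec_apply (hdiag : ∀ i, ω i i = 0) (w : Fin n → ℝ) (i : Fin n) :
    (stressMatrix ω *ᵥ w) i = ∑ j, ω i j * (w i - w j) := by
  have hentry : ∀ j, stressMatrix ω i j = (if i = j then ∑ k, ω i k else 0) - ω i j := by
    intro j
    by_cases h : i = j
    · subst h; simp [stressMatrix, hdiag]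
    · simp [stressMatrix, h]
  simp only [mulVec, dotProduct, hentry, sub_mul, ite_mul, zero_mul, Finset.sum_sub_distrib,
    Finset.sum_ite_eq, Finset.mem_univ, if_true, mul_sub, Finset.sum_mul]

lemma sum_stressMatrix_mulVec (hsymm : ∀ i j, ω i j = ω j i) (hdiag : ∀ i, ω i i = 0)
    (w : Fin n → ℝ) : ∑ i, (stressMatrix ω *ᵥ w) i = 0 := by
  simp only [stressMatrix_mulVec_apply hdiag, mul_sub, Finset.sum_sub_distrib]
  rw [sub_eq_zero, Finset.sum_comm]
  exact Finset.sum_congr rfl fun i _ => Finset.sum_congr rfl fun j _ => by rw [hsymm]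

variable {E : Set (Fin n × Fin n)} {p : Fin n → Fin r → ℝ}

lemma stressMatrix_mul_homogeneousConfig (hstress : IsStress E p ω) (hdiag : ∀ i, ω i i = 0) :
    stressMatrix ω * homogeneousConfig p = 0 := by
  ext i (l | u)
  · show (stressMatrix ω *ᵥ fun j => p j l) i = 0
    rw [stressMatrix_mulVec_apply hdiag]
    simpa [Finset.sum_apply] using congrFun (hstress.2.2 i) l
  · show (stressMatrix ω *ᵥ fun _ => 1) i = 0
    simp [stressMatrix_mulVec_apply hdiag]

lemma stressMatrix_mulVec_quadForm (hstress : IsStress E p ω) (hdiag : ∀ i, ω i i = 0)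
    {Φ : Matrix (Fin r) (Fin r) ℝ} (hΦ : Φ.IsSymm) (i : Fin n) :
    (stressMatrix ω *ᵥ fun j => p j ⬝ᵥ Φ *ᵥ p j) i = -∑ j, ω i j * edgeQuad p Φ i j := by
  have hsplit : ∀ j, ω i j * (p i ⬝ᵥ Φ *ᵥ p i - p j ⬝ᵥ Φ *ᵥ p j) =
      2 * ((ω i j • (p i - p j)) ⬝ᵥ Φ *ᵥ p i) - ω i j * edgeQuad p Φ i j := by
    intro j
    simp only [edgeQuad, of_apply, smul_dotProduct, sub_dotProduct, mulVec_sub, dotProduct_sub,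
      hΦ.dotProduct_mulVec_comm (p i) (p j), smul_eq_mul]
    ring
  rw [stressMatrix_mulVec_apply hdiag, Finset.sum_congr rfl fun j _ => hsplit j,
    Finset.sum_sub_distrib, ← Finset.mul_sum, ← sum_dotProduct, hstress.2.2 i, zero_dotProduct,
    mul_zero, zero_sub]

lemma stress_mul_edgeQuad_eq_zero (hstress : IsStress E p ω) (hdiag : ∀ i, ω i i = 0)
    {Φ : Matrix (Fin r) (Fin r) ℝ} (hΦ : Φ.IsSymm)
    (hle : ∀ i j, ω i j * edgeQuad p Φ i j ≤ 0) (i j : Fin n) : ω i j * edgeQuad p Φ i j = 0 := by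
  have htotal : ∑ i, ∑ j, ω i j * edgeQuad p Φ i j = 0 := by
    simpa [stressMatrix_mulVec_quadForm hstress hdiag hΦ] using
      sum_stressMatrix_mulVec hstress.1 hdiag fun j => p j ⬝ᵥ Φ *ᵥ p j
  have hrow := (Finset.sum_eq_zero_iff_of_nonpos fun i _ =>
    Finset.sum_nonpos fun j _ => hle i j).1 htotal i (Finset.mem_univ i)
  exact (Finset.sum_eq_zero_iff_of_nonpos fun j _ => hle i j).1 hrow j (Finset.mem_univ j)

end Stress

lemma IsGaleMatrix.edgeQuad_mul_eq_zero_of_stress {n r m : ℕ} {E : Set (Fin n × Fin n)}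
    {p : Fin n → Fin r → ℝ} (hdim : affineSpan ℝ (Set.range p) = ⊤)
    (hcentroid : ∀ k, ∑ i, p i k = 0) {ω : Fin n → Fin n → ℝ} (hstress : IsStress E p ω)
    (hdiag : ∀ i, ω i i = 0) (hrank : (stressMatrix ω).rank = n - r - 1)
    {Z : Matrix (Fin n) (Fin m) ℝ} (hZ : IsGaleMatrix (of p) Z) {Φ : Matrix (Fin r) (Fin r) ℝ}
    (hΦ : Φ.IsSymm) (hωΦ : ∀ i j, ω i j * edgeQuad p Φ i j = 0) : edgeQuad p Φ * Z = 0 := by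
  have hker : LinearMap.ker (stressMatrix ω).mulVecLin =
      LinearMap.range (homogeneousConfig p).mulVecLin :=
    ker_mulVecLin_eq_range_of_mul_eq_zero _ _ (homogeneousConfig_mulVec_injective p hdim hcentroid)
      (stressMatrix_mul_homogeneousConfig hstress hdiag) (by simpa [Nat.sub_sub] using hrank)
  obtain ⟨w, hw⟩ :
      (fun j => p j ⬝ᵥ Φ *ᵥ p j) ∈ LinearMap.range (homogeneousConfig p).mulVecLin := by
    rw [← hker, LinearMap.mem_ker, mulVecLin_apply]
    funext i
    simp [stressMatrix_mulVec_quadForm hstress hdiag hΦ, hωΦ]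
  exact hZ.edgeQuad_mul_eq_zero hΦ (hw ▸ hZ.homogeneousConfig_mulVec_vecMul w)

/-- `EscrY y` is the paper's `ℰ⁰(y)`, since `y` vanishes off `Ē ∪ C⁰ ∪ S⁰` (read on pairs
`i < j`). -/
def IsGaleCertificate {n m : ℕ} (B C S : Set (Fin n × Fin n)) (ω : Fin n → Fin n → ℝ)
    (Z : Matrix (Fin n) (Fin m) ℝ) (y : Fin n → Fin n → ℝ) : Prop :=
  y ≠ 0 ∧
    (∀ i j, y i j ≠ 0 → i < j ∧ ((i, j) ∉ B ∪ C ∪ S ∨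
      ((i, j) ∈ C ∧ ω i j = 0) ∨ ((i, j) ∈ S ∧ ω i j = 0))) ∧
    (∀ i j, (i, j) ∈ C → ω i j = 0 → 0 ≤ y i j) ∧
    (∀ i j, (i, j) ∈ S → ω i j = 0 → y i j ≤ 0) ∧
    EscrY y * Z = 0

section GaleCertificate

variable {n m : ℕ} {B C S : Set (Fin n × Fin n)} {ω : Fin n → Fin n → ℝ}
  {Z : Matrix (Fin n) (Fin m) ℝ}

lemma escrY_apply (y : Fin n → Fin n → ℝ) (i j : Fin n) : EscrY y i j = y i j + y j i := by
  simp [EscrY, Emat, Matrix.sum_apply, vecMulVec_apply, Pi.single_apply, Finset.sum_add_distrib]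

lemma escrY_isSymm (y : Fin n → Fin n → ℝ) : (EscrY y).IsSymm := by
  ext i j
  rw [transpose_apply, escrY_apply, escrY_apply, add_comm]

def strictUpper (D : Matrix (Fin n) (Fin n) ℝ) : Fin n → Fin n → ℝ :=
  fun i j => if i < j then D i j else 0

lemma escrY_strictUpper {D : Matrix (Fin n) (Fin n) ℝ} (hD : D.IsSymm) (hdiag : ∀ i, D i i = 0) :
    EscrY (strictUpper D) = D := by
  ext i j
  rw [escrY_apply]
  rcases lt_trichotomy i j with h | rfl | h
  · simp [strictUpper, h, h.not_gt]
  · simp [strictUpper, hdiag]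
  · simp [strictUpper, h, h.not_gt, hD.apply i j]

lemma strictUpper_escrY {y : Fin n → Fin n → ℝ} (hy : ∀ i j, y i j ≠ 0 → i < j) :
    strictUpper (EscrY y) = y := by
  have hy' : ∀ i j, ¬ i < j → y i j = 0 := fun i j h => by_contra fun h' => h (hy i j h')
  ext i j
  unfold strictUpper
  split_ifs with h
  · rw [escrY_apply, hy' j i h.not_gt, add_zero]
  · rw [hy' i j h]

lemma isGaleCertificate_strictUpper {D : Matrix (Fin n) (Fin n) ℝ} (hD : D.IsSymm)
    (hdiag : ∀ i, D i i = 0) (hne : D ≠ 0) (hsupp : ∀ i j, D i j ≠ 0 → (i, j) ∉ B ∧ ω i j = 0)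
    (hC : ∀ e ∈ C, 0 ≤ D e.1 e.2) (hS : ∀ e ∈ S, D e.1 e.2 ≤ 0) (hDZ : D * Z = 0) :
    IsGaleCertificate B C S ω Z (strictUpper D) := by
  have hE := escrY_strictUpper hD hdiag
  refine ⟨fun h => hne ?_, fun i j h => ?_, fun i j hiC _ => ?_, fun i j hiS _ => ?_, by rwa [hE]⟩
  · rw [← hE, h]
    simp [EscrY]
  · have hij : i < j := by_contra fun hij => h (if_neg hij)
    obtain ⟨hiB, hω⟩ := hsupp i j (by simpa [strictUpper, hij] using h)
    refine ⟨hij, ?_⟩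
    by_cases hiC : (i, j) ∈ C
    · exact Or.inr (Or.inl ⟨hiC, hω⟩)
    by_cases hiS : (i, j) ∈ S
    · exact Or.inr (Or.inr ⟨hiS, hω⟩)
    exact Or.inl (by simp [hiB, hiC, hiS])
  · unfold strictUpper
    split_ifs
    exacts [hC _ hiC, le_rfl]
  · unfold strictUpper
    split_ifs
    exacts [hS _ hiS, le_rfl]

variable {y : Fin n → Fin n → ℝ}

lemma IsGaleCertificate.escrY_apply_self (hy : IsGaleCertificate B C S ω Z y) (i : Fin n) :
    EscrY y i i = 0 := by
  have hyii : y i i = 0 := by_contra fun h => lt_irrefl i (hy.2.1 i i h).1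
  rw [escrY_apply, hyii, add_zero]

lemma IsGaleCertificate.escrY_ne_zero (hy : IsGaleCertificate B C S ω Z y) : EscrY y ≠ 0 := by
  intro h
  apply hy.1
  rw [← strictUpper_escrY fun i j hij => (hy.2.1 i j hij).1, h]
  ext i j
  simp [strictUpper]

lemma IsGaleCertificate.escrY_sign (hG : TensegrityGraph B C S)
    (hy : IsGaleCertificate B C S ω Z y) :
    (∀ e ∈ B, EscrY y e.1 e.2 = 0) ∧ (∀ e ∈ C, 0 ≤ EscrY y e.1 e.2) ∧
      (∀ e ∈ S, EscrY y e.1 e.2 ≤ 0) := by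
  obtain ⟨symB, symC, symS, -, hBC, hBS, hCS, -⟩ := hG
  obtain ⟨-, hsupp, hyC, hyS, -⟩ := hy
  have hyB' : ∀ i j, (i, j) ∈ B → y i j = 0 := fun i j hiB => by_contra fun h => by
    rcases (hsupp i j h).2 with h' | ⟨hiC, -⟩ | ⟨hiS, -⟩
    · exact h' (by simp [hiB])
    · exact (hBC ▸ ⟨hiB, hiC⟩ : (i, j) ∈ (∅ : Set _))
    · exact (hBS ▸ ⟨hiB, hiS⟩ : (i, j) ∈ (∅ : Set _))
  have hyC' : ∀ i j, (i, j) ∈ C → 0 ≤ y i j := fun i j hiC => by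
    by_cases h : y i j = 0
    · exact h.ge
    rcases (hsupp i j h).2 with h' | ⟨-, hω⟩ | ⟨hiS, -⟩
    · exact (h' (by simp [hiC])).elim
    · exact hyC i j hiC hω
    · exact (hCS ▸ ⟨hiC, hiS⟩ : (i, j) ∈ (∅ : Set _)).elim
  have hyS' : ∀ i j, (i, j) ∈ S → y i j ≤ 0 := fun i j hiS => by
    by_cases h : y i j = 0
    · exact h.le
    rcases (hsupp i j h).2 with h' | ⟨hiC, -⟩ | ⟨-, hω⟩
    · exact (h' (by simp [hiS])).elim
    · exact (hCS ▸ ⟨hiC, hiS⟩ : (i, j) ∈ (∅ : Set _)).elim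
    · exact hyS i j hiS hω
  refine ⟨fun ⟨i, j⟩ he => ?_, fun ⟨i, j⟩ he => ?_, fun ⟨i, j⟩ he => ?_⟩ <;> rw [escrY_apply]
  · rw [hyB' i j he, hyB' j i (symB i j he), add_zero]
  · exact add_nonneg (hyC' i j he) (hyC' j i (symC i j he))
  · exact add_nonpos (hyS' i j he) (hyS' j i (symS i j he))

end GaleCertificate

theorem isGaleCertificate_of_affinelyDominated {n r m : ℕ} {B C S : Set (Fin n × Fin n)}
    (hG : TensegrityGraph B C S) {p : Fin n → Fin r → ℝ}
    (hdim : affineSpan ℝ (Set.range p) = ⊤) (hcentroid : ∀ k, ∑ i, p i k = 0)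
    {ω : Fin n → Fin n → ℝ} (hstress : IsStress (B ∪ C ∪ S) p ω)
    (hproper : IsProperStress C S ω) (hrank : (stressMatrix ω).rank = n - r - 1)
    {Z : Matrix (Fin n) (Fin m) ℝ} (hZ : IsGaleMatrix (of p) Z) {p' : Fin n → Fin r → ℝ}
    (hdom : AffinelyDominated B C S p p') (hnc : ¬ FrameworkCongruent p p') :
    ∃ y, IsGaleCertificate B C S ω Z y := by
  obtain ⟨hdom, A, b, hp'⟩ := hdom
  have hdiag : ∀ i, ω i i = 0 := fun i => hstress.2.1 i i (hG.2.2.2.1 i)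
  have hΦ : (Aᵀ * A - 1).IsSymm := by simp [IsSymm, transpose_mul]
  set Δ := edgeQuad p (Aᵀ * A - 1)
  have hdist : ∀ i j, sqDist (p' i) (p' j) = sqDist (p i) (p j) + Δ i j := fun i j => by
    rw [hp', hp', sqDist_mulVec_add]
    rfl
  have hωΔ : ∀ i j, ω i j * Δ i j = 0 := by
    refine stress_mul_edgeQuad_eq_zero hstress hdiag hΦ fun i j => ?_
    simpa [hdist] using hdom.stress_mul_sub_nonpos hstress.2.1 hproper i j
  refine ⟨_, isGaleCertificate_strictUpper (D := (-1 / 2 : ℝ) • Δ) ((edgeQuad_isSymm p _).smul _)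
    (fun i => by simp [Δ, edgeQuad_apply_self]) (fun h => hnc fun i j => ?_) (fun i j h => ?_)
    (fun ⟨i, j⟩ he => ?_) (fun ⟨i, j⟩ he => ?_) ?_⟩
  · have hΔ : Δ i j = 0 := by simpa using congrFun (congrFun h i) j
    rw [hdist, hΔ, add_zero]
  · have hΔ : Δ i j ≠ 0 := by simpa using h
    refine ⟨fun he => hΔ ?_, (mul_eq_zero.1 (hωΔ i j)).resolve_right hΔ⟩
    linarith [hdom.1 _ he, hdist i j]
  · simp only [Matrix.smul_apply, smul_eq_mul]
    linarith [hdom.2.1 _ he, hdist i j]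
  · simp only [Matrix.smul_apply, smul_eq_mul]
    linarith [hdom.2.2 _ he, hdist i j]
  · rw [smul_mul, hZ.edgeQuad_mul_eq_zero_of_stress hdim hcentroid hstress hdiag hrank hΦ hωΔ,
      smul_zero]

theorem affinelyDominated_of_isGaleCertificate {n r m : ℕ} {B C S : Set (Fin n × Fin n)}
    (hG : TensegrityGraph B C S) {p : Fin n → Fin r → ℝ}
    (hdim : affineSpan ℝ (Set.range p) = ⊤) (hcentroid : ∀ k, ∑ i, p i k = 0)
    {ω : Fin n → Fin n → ℝ} {Z : Matrix (Fin n) (Fin m) ℝ} (hZ : IsGaleMatrix (of p) Z)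
    {y : Fin n → Fin n → ℝ} (hy : IsGaleCertificate B C S ω Z y) :
    ∃ p' : Fin n → Fin r → ℝ, AffinelyDominated B C S p p' ∧ ¬ FrameworkCongruent p p' := by
  obtain ⟨hB, hC, hS⟩ := hy.escrY_sign hG
  obtain ⟨M, hM, hEM⟩ := exists_isSymm_eq_mul_mul_transpose _
    (homogeneousConfig_mulVec_injective p hdim hcentroid) _ (escrY_isSymm y)
    fun v hv => hZ.mulVec_eq_zero hy.2.2.2.2 hv
  have hquad : ∀ i j, edgeQuad p M.toBlocks₁₁ i j = -2 * EscrY y i j := fun i j => by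
    rw [edgeQuad_toBlocks₁₁ p hEM, hy.escrY_apply_self, hy.escrY_apply_self,
      (escrY_isSymm y).apply i j]
    ring
  obtain ⟨s, hs, A, hA⟩ := exists_transpose_mul_self_eq_one_add_smul M.toBlocks₁₁
    (hM.submatrix Sum.inl)
  have hdist : ∀ i j, sqDist (A *ᵥ p i) (A *ᵥ p j) = sqDist (p i) (p j) - 2 * s * EscrY y i j := by
    intro i j
    have h := sqDist_mulVec_add A 0 (p i) (p j)
    rw [add_zero, add_zero, hA, add_sub_cancel_left, smul_mulVec, dotProduct_smul, smul_eq_mul] at h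
    have hq := hquad i j
    rw [edgeQuad, of_apply] at hq
    rw [h, hq]
    ring
  refine ⟨fun i => A *ᵥ p i, ⟨⟨fun ⟨i, j⟩ he => ?_, fun ⟨i, j⟩ he => ?_, fun ⟨i, j⟩ he => ?_⟩,
    A, 0, fun i => (add_zero _).symm⟩, fun hcong => hy.escrY_ne_zero ?_⟩
  · simp [hdist, hB _ he]
  · nlinarith [hdist i j, hC _ he]
  · nlinarith [hdist i j, hS _ he]
  · ext i j
    have h := hcong i j
    rw [hdist] at h
    simpa [hs.ne'] using h

/-- if moreover `rank Ω = n-r-1`, the Gale characterization of the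
existence of a framework affinely-dominated by but not congruent to `(G,p)`
becomes `ℰ⁰(y) Z = 0`. -/
theorem statement18 {n r : ℕ}
    (B C S : Set (Fin n × Fin n)) (hG : TensegrityGraph B C S)
    (p : Fin n → Fin r → ℝ)
    (hdim : affineSpan ℝ (Set.range p) = ⊤)
    (hcentroid : ∀ k, ∑ i, p i k = 0)
    (ω : Fin n → Fin n → ℝ)
    (hstress : IsStress (B ∪ C ∪ S) p ω)
    (hproper : IsProperStress C S ω)
    (hrank : (stressMatrix ω).rank = n - r - 1)
    (Z : Matrix (Fin n) (Fin (n - r - 1)) ℝ)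
    (hZ : IsGaleMatrix (Matrix.of p) Z) :
    (∃ p' : Fin n → Fin r → ℝ,
        AffinelyDominated B C S p p' ∧ ¬ FrameworkCongruent p p') ↔
      ∃ y : Fin n → Fin n → ℝ, y ≠ 0 ∧
        (∀ i j, y i j ≠ 0 → i < j ∧ ((i, j) ∉ B ∪ C ∪ S ∨
          ((i, j) ∈ C ∧ ω i j = 0) ∨ ((i, j) ∈ S ∧ ω i j = 0))) ∧
        (∀ i j, (i, j) ∈ C → ω i j = 0 → 0 ≤ y i j) ∧
        (∀ i j, (i, j) ∈ S → ω i j = 0 → y i j ≤ 0) ∧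
        EscrY y * Z = 0 := by
  constructor
  · rintro ⟨p', hdom, hnc⟩
    exact isGaleCertificate_of_affinelyDominated hG hdim hcentroid hstress hproper hrank hZ hdom hnc
  · rintro ⟨y, hy⟩
    exact affinelyDominated_of_isGaleCertificate hG hdim hcentroid hZ hy
end
end
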